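/- Let W be a standard one-dimensional Brownian motion, and for r > 0 define τ_r⁺ := inf{ s ≥ 0 : W(s) − inf_{0≤u≤s} W(u) = r } and β_r⁺ := inf{ s ≥ 0 : W(s) = inf_{0≤u≤τ_r⁺} W(u) }. Then with probability one, β_r⁺ > r²/(log r)⁴ for all sufficiently large r. -/

import Mathlib

/-!
Let `n = ⌊log r⌋` and `T_n = e^{2n+2}/n⁴ ≥ r²/(log r)⁴`. Put `h_n² = 16 T_n log n` and
`v_n = e^{2n}/(64 log n)`. Unless a bad event `B_n` occurs, the path stays above `-h_n` on
`[0, T_n]`, and on `[0, v_n]` it stays below `e^n - h_n` while reaching `-h_n`. A rise by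
`r ≥ e^n` above the running minimum is then impossible before the minimum reaches `-h_n`, so the
minimum before `τ_r⁺` is at most `-h_n` and is attained only after `T_n`.

The reflection principle, proved on finite grids from the independence and symmetry of Gaussian
increments and passed to continuous time by continuity of paths, gives
`P(B_n) = O(log n / n²)`. Borel–Cantelli, together with the unboundedness of `W` from above
(which makes `τ_r⁺` finite), concludes.
-/

open MeasureTheory ProbabilityTheory Set

noncomputable section

/-- `B` is a standard one-dimensional Brownian motion started at `0` under the
probability measure `P` (only its behavior at nonnegative times is constrained):
it starts at `0`, has continuous paths, and has independent increments with
`B t - B s` Gaussian of mean `0` and variance `t - s` for `0 ≤ s ≤ t`. -/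
structure IsBrownianMotion {Ω : Type*} [MeasurableSpace Ω] (P : Measure Ω)
    (B : ℝ → Ω → ℝ) : Prop where
  isProb : IsProbabilityMeasure P
  init : ∀ ω, B 0 ω = 0
  cont : ∀ ω, Continuous fun t => B t ω
  meas : ∀ t, Measurable (B t)
  gauss : ∀ s t : ℝ, 0 ≤ s → s ≤ t →
    Measure.map (fun ω => B t ω - B s ω) P = gaussianReal 0 (t - s).toNNReal
  indep : ∀ (n : ℕ) (ts : Fin (n + 1) → ℝ), (∀ i, 0 ≤ ts i) → Monotone ts →
    iIndepFun
      (fun (i : Fin n) (ω : Ω) => B (ts i.succ) ω - B (ts i.castSucc) ω) P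

/-- The restriction of a process to nonnegative times, as a path-valued map. -/
def nnPath {Ω : Type*} (W : ℝ → Ω → ℝ) (ω : Ω) : {t : ℝ // 0 ≤ t} → ℝ :=
  fun t => W t.1 ω

/-- `W` is a two-sided standard Brownian motion under `P`: `(W t)_{t ≥ 0}` and
`(W (-t))_{t ≥ 0}` are independent standard Brownian motions started at `0`. -/
structure IsTwoSidedBM {Ω : Type*} [MeasurableSpace Ω] (P : Measure Ω)
    (W : ℝ → Ω → ℝ) : Prop where
  pos : IsBrownianMotion P fun t ω => W t ω
  neg : IsBrownianMotion P fun t ω => W (-t) ω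
  indep : IndepFun (nnPath W) (nnPath fun t ω => W (-t) ω) P

/-- `f` admits an `x`-minimum at `y₀`. -/
def xMinimumAt (f : ℝ → ℝ) (x y₀ : ℝ) : Prop :=
  ∃ a b : ℝ, a < y₀ ∧ y₀ < b ∧ (∀ y ∈ Icc a b, f y₀ ≤ f y) ∧
    f y₀ + x ≤ f a ∧ f y₀ + x ≤ f b

/-- `f` admits an `x`-maximum at `y₀`. -/
def xMaximumAt (f : ℝ → ℝ) (x y₀ : ℝ) : Prop :=
  xMinimumAt (fun t => -f t) x y₀

/-- `y₀` is an `x`-extremum of `f`. -/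
def xExtremumAt (f : ℝ → ℝ) (x y₀ : ℝ) : Prop :=
  xMinimumAt f x y₀ ∨ xMaximumAt f x y₀

/-- `x₁(f, x)`: the smallest positive `x`-extremum of `f`. -/
def xOnePt (f : ℝ → ℝ) (x : ℝ) : ℝ :=
  sInf {y : ℝ | 0 < y ∧ xExtremumAt f x y}

/-- `x₀(f, x)`: the largest nonpositive `x`-extremum of `f`. -/
def xZeroPt (f : ℝ → ℝ) (x : ℝ) : ℝ :=
  sSup {y : ℝ | y ≤ 0 ∧ xExtremumAt f x y}

attribute [local instance] Classical.propDecidable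

/-- `b_x(f)`: that one of `x₀(f,x)`, `x₁(f,x)` which is an `x`-minimum of `f`. -/
def bProc (f : ℝ → ℝ) (x : ℝ) : ℝ :=
  if xMinimumAt f x (xOnePt f x) then xOnePt f x else xZeroPt f x

/-- `g` jumps at `x`: `g` is not locally constant at `x`. -/
def jumpsAt (g : ℝ → ℝ) (x : ℝ) : Prop :=
  ¬ ∃ ε > 0, ∀ y ∈ Ioo (x - ε) (x + ε), g y = g x

/-- `W^#(x, y)`: the maximal ascent of `f` encountered travelling from `x` to `y`. -/
def sharp (f : ℝ → ℝ) (x y : ℝ) : ℝ :=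
  if x ≤ y then sSup {d : ℝ | ∃ u v : ℝ, x ≤ u ∧ u ≤ v ∧ v ≤ y ∧ d = f v - f u}
  else sSup {d : ℝ | ∃ u v : ℝ, y ≤ v ∧ v ≤ u ∧ u ≤ x ∧ d = f v - f u}

/-- The running infimum `inf_{0 ≤ u ≤ t} W u ω`. -/
def runInf {Ω : Type*} (W : ℝ → Ω → ℝ) (ω : Ω) (t : ℝ) : ℝ :=
  sInf ((fun u => W u ω) '' Icc 0 t)

/-- The running supremum `sup_{0 ≤ u ≤ t} W u ω`. -/
def runSup {Ω : Type*} (W : ℝ → Ω → ℝ) (ω : Ω) (t : ℝ) : ℝ :=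
  sSup ((fun u => W u ω) '' Icc 0 t)

/-- `τ_r⁺`: the first time the process rises `r` above its running minimum. -/
def tauPlus {Ω : Type*} (W : ℝ → Ω → ℝ) (r : ℝ) (ω : Ω) : ℝ :=
  sInf {s : ℝ | 0 ≤ s ∧ W s ω - runInf W ω s = r}

/-- `β_r⁺`: the first time the process attains the minimum value it reaches
before time `τ_r⁺`. -/
def betaPlus {Ω : Type*} (W : ℝ → Ω → ℝ) (r : ℝ) (ω : Ω) : ℝ :=
  sInf {s : ℝ | 0 ≤ s ∧ W s ω = runInf W ω (tauPlus W r ω)}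

open Real Filter Topology
open scoped NNReal ENNReal

section Gaussian

lemma gaussianReal_Iic_neg (v : ℝ≥0) (a : ℝ) :
    gaussianReal 0 v (Iic (-a)) = gaussianReal 0 v (Ici a) := by
  conv_lhs => rw [← neg_zero, ← gaussianReal_map_neg]
  rw [Measure.map_apply measurable_neg measurableSet_Iic]
  congr 1
  ext x
  simp

lemma gaussianReal_Ici_le_exp (v : ℝ≥0) {c : ℝ} (hc : 0 ≤ c) :
    gaussianReal 0 v (Ici c) ≤ ENNReal.ofReal (exp (-c ^ 2 / (2 * v))) := by
  rcases eq_zero_or_pos v with rfl | hv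
  · simpa using prob_le_one (μ := gaussianReal 0 0) (s := Ici c)
  have hv' : (0 : ℝ) < v := hv
  have h := measure_ge_le_exp_mul_mgf (X := id) (μ := gaussianReal 0 v) c (div_nonneg hc hv'.le)
    (integrable_exp_mul_gaussianReal (c / v))
  rw [mgf_id_gaussianReal] at h
  rw [← ofReal_measureReal (measure_ne_top _ _)]
  refine ENNReal.ofReal_le_ofReal (le_of_le_of_eq h ?_)
  rw [← exp_add]
  congr 1
  field_simp
  ring

lemma gaussianReal_Icc_le {v : ℝ≥0} (hv : v ≠ 0) (a b : ℝ) :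
    gaussianReal 0 v (Icc a b) ≤ ENNReal.ofReal ((b - a) / √(2 * π * v)) := by
  rcases lt_or_ge b a with hab | hab
  · simp [Icc_eq_empty_of_lt hab]
  rw [gaussianReal_apply_eq_integral 0 hv]
  refine ENNReal.ofReal_le_ofReal ?_
  calc ∫ x in Icc a b, gaussianPDFReal 0 v x ≤ ∫ _ in Icc a b, (√(2 * π * v))⁻¹ := by
        refine setIntegral_mono_on (integrable_gaussianPDFReal 0 v).integrableOn
          (integrableOn_const measure_Icc_lt_top.ne) measurableSet_Icc fun x _ => ?_
        rw [gaussianPDFReal]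
        refine mul_le_of_le_one_right (by positivity) (exp_le_one_iff.mpr ?_)
        exact div_nonpos_of_nonpos_of_nonneg (by nlinarith [sq_nonneg (x - 0)]) (by positivity)
    _ = (b - a) / √(2 * π * v) := by
        rw [setIntegral_const, Real.volume_real_Icc_of_le hab, smul_eq_mul, div_eq_mul_inv]

lemma one_le_two_mul_gaussianReal_Iic_add (v : ℝ≥0) (a : ℝ) :
    1 ≤ 2 * gaussianReal 0 v (Iic (-a)) + gaussianReal 0 v (Icc (-a) a) := by
  have hcover : univ ⊆ Iic (-a) ∪ Icc (-a) a ∪ Ici a := fun x _ => by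
    rcases le_total x (-a) with h | h
    · exact Or.inl (Or.inl h)
    rcases le_total x a with h' | h'
    · exact Or.inl (Or.inr ⟨h, h'⟩)
    · exact Or.inr h'
  calc (1 : ℝ≥0∞) = gaussianReal 0 v univ := measure_univ.symm
    _ ≤ _ := (measure_mono hcover).trans <|
        (measure_union_le _ _).trans (add_le_add_left (measure_union_le _ _) _)
    _ = _ := by rw [← gaussianReal_Iic_neg]; ring

end Gaussian

namespace IsBrownianMotion

variable {Ω : Type*} [MeasurableSpace Ω] {P : Measure Ω} {W : ℝ → Ω → ℝ}

lemma measurable_sub (hW : IsBrownianMotion P W) (s t : ℝ) :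
    Measurable fun ω => W t ω - W s ω :=
  (hW.meas t).sub (hW.meas s)

protected lemma neg (hW : IsBrownianMotion P W) : IsBrownianMotion P fun t ω => -W t ω where
  isProb := hW.isProb
  init ω := by simp [hW.init ω]
  cont ω := (hW.cont ω).neg
  meas t := (hW.meas t).neg
  gauss s t hs hst := by
    have h := Measure.map_map (μ := P) measurable_neg (hW.measurable_sub s t)
    rw [hW.gauss s t hs hst, gaussianReal_map_neg, neg_zero] at h
    simpa only [Function.comp_def, neg_sub_neg, neg_sub] using h.symm
  indep n ts hts hmono := by
    simpa only [Function.comp_def, neg_sub_neg, neg_sub] using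
      (hW.indep n ts hts hmono).comp (fun _ x => -x) fun _ => measurable_neg

lemma measure_sub_mem (hW : IsBrownianMotion P W) {s t : ℝ} (hs : 0 ≤ s) (hst : s ≤ t)
    {B : Set ℝ} (hB : MeasurableSet B) :
    P {ω | W t ω - W s ω ∈ B} = gaussianReal 0 (t - s).toNNReal B := by
  rw [← hW.gauss s t hs hst, Measure.map_apply (hW.measurable_sub s t) hB]
  rfl

lemma measure_mem (hW : IsBrownianMotion P W) {t : ℝ} (ht : 0 ≤ t) {B : Set ℝ}
    (hB : MeasurableSet B) : P {ω | W t ω ∈ B} = gaussianReal 0 t.toNNReal B := by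
  simpa [hW.init] using hW.measure_sub_mem le_rfl ht hB

lemma measure_sub_le_neg_le (hW : IsBrownianMotion P W) {s t c : ℝ} (hs : 0 ≤ s) (hst : s < t)
    (hc : 0 ≤ c) :
    P {ω | W t ω - W s ω ≤ -c} ≤ ENNReal.ofReal (exp (-c ^ 2 / (2 * (t - s)))) := by
  have h := hW.measure_sub_mem hs hst.le (measurableSet_Iic (a := -c))
  rw [show {ω | W t ω - W s ω ∈ Iic (-c)} = {ω | W t ω - W s ω ≤ -c} from rfl] at h
  rw [h, gaussianReal_Iic_neg]
  simpa [Real.coe_toNNReal _ (sub_nonneg.mpr hst.le)] using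
    gaussianReal_Ici_le_exp (t - s).toNNReal hc

variable {a : ℕ → ℝ}

lemma indepFun_past_sub (hW : IsBrownianMotion P W) (ha : Monotone a) (ha0 : a 0 = 0)
    {i k : ℕ} (hik : i ≤ k) :
    IndepFun (fun ω (j : Fin (i + 1)) => W (a j) ω) (fun ω => W (a k) ω - W (a i) ω) P := by
  classical
  set inc : ℕ → Ω → ℝ := fun l ω => W (a (l + 1)) ω - W (a l) ω
  have hX : iIndepFun (fun l : Fin k => inc l) P :=
    hW.indep k (fun l => a l) (fun l => ha0 ▸ ha (Nat.zero_le _)) fun _ _ h => ha h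
  set S := Finset.univ.filter fun l : Fin k => l.1 < i
  set T := Finset.univ.filter fun l : Fin k => i ≤ l.1
  have hST : Disjoint S T := Finset.disjoint_filter.mpr fun l _ h => not_le.mpr h
  -- the past is a function of the increments indexed by `S`, the later increment of those in `T`
  let φ : (S → ℝ) → Fin (i + 1) → ℝ := fun x j => ∑ l ∈ Finset.range j,
    if hl : l < k ∧ l < i then x ⟨⟨l, hl.1⟩, by simp [S, hl.2]⟩ else 0
  let ψ : (T → ℝ) → ℝ := fun x => ∑ l ∈ Finset.Ico i k,
    if hl : l < k ∧ i ≤ l then x ⟨⟨l, hl.1⟩, by simp [T, hl.2]⟩ else 0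
  have hφ : Measurable φ := by
    refine measurable_pi_lambda _ fun j => Finset.measurable_sum _ fun l _ => ?_
    split_ifs
    exacts [measurable_pi_apply _, measurable_const]
  have hψ : Measurable ψ := by
    refine Finset.measurable_sum _ fun l _ => ?_
    split_ifs
    exacts [measurable_pi_apply _, measurable_const]
  convert (hX.indepFun_finset S T hST fun l => hW.measurable_sub _ _).comp hφ hψ using 1
  · ext ω j
    have hj : (j : ℕ) ≤ i := Nat.lt_succ_iff.mp j.2
    simp only [Function.comp_apply, φ]
    rw [Finset.sum_congr rfl fun l hl => dif_pos
      (by have := Finset.mem_range.mp hl; omega : l < k ∧ l < i)]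
    simp only [inc, Finset.sum_range_sub (fun l => W (a l) ω), ha0, hW.init, sub_zero]
  · ext ω
    simp only [Function.comp_apply, ψ]
    rw [Finset.sum_congr rfl fun l hl => dif_pos
      (by have := Finset.mem_Ico.mp hl; omega : l < k ∧ i ≤ l)]
    simp only [inc, Finset.sum_Ico_eq_sub _ hik, Finset.sum_range_sub (fun l => W (a l) ω)]
    ring

lemma measure_preimage_inter_sub_nonneg (hW : IsBrownianMotion P W) (ha : Monotone a)
    (ha0 : a 0 = 0) {i k : ℕ} (hik : i ≤ k) {C : Set (Fin (i + 1) → ℝ)} (hC : MeasurableSet C) :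
    P ((fun ω (j : Fin (i + 1)) => W (a j) ω) ⁻¹' C ∩ {ω | 0 ≤ W (a k) ω - W (a i) ω})
      = P ((fun ω (j : Fin (i + 1)) => W (a j) ω) ⁻¹' C ∩ {ω | W (a k) ω - W (a i) ω ≤ 0}) := by
  have hind := hW.indepFun_past_sub ha ha0 hik
  have hnn : ∀ j, 0 ≤ a j := fun j => ha0 ▸ ha (Nat.zero_le j)
  have hsymm : P {ω | W (a k) ω - W (a i) ω ∈ Ici 0} = P {ω | W (a k) ω - W (a i) ω ∈ Iic 0} := by
    rw [hW.measure_sub_mem (hnn i) (ha hik) measurableSet_Ici,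
      hW.measure_sub_mem (hnn i) (ha hik) measurableSet_Iic]
    simpa using (gaussianReal_Iic_neg (a k - a i).toNNReal 0).symm
  refine (hind.measure_inter_preimage_eq_mul _ _ hC measurableSet_Ici).trans ?_
  refine Eq.trans ?_ (hind.measure_inter_preimage_eq_mul _ _ hC measurableSet_Iic).symm
  exact congrArg _ hsymm

end IsBrownianMotion

section FirstPassage

variable {Ω : Type*} {W : ℝ → Ω → ℝ} {a : ℕ → ℝ} {c : ℝ}

def firstBelow (W : ℝ → Ω → ℝ) (a : ℕ → ℝ) (c : ℝ) (i : ℕ) : Set Ω :=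
  {ω | W (a i) ω ≤ -c ∧ ∀ j < i, -c < W (a j) ω}

lemma firstBelow_eq_preimage (i : ℕ) :
    firstBelow W a c i = (fun ω (j : Fin (i + 1)) => W (a j) ω) ⁻¹'
      {x | x (Fin.last i) ≤ -c ∧ ∀ j : Fin (i + 1), j < Fin.last i → -c < x j} := by
  ext ω
  simp only [firstBelow, mem_preimage, Fin.val_last, Fin.lt_def]
  exact and_congr_right' ⟨fun h j hj => h j hj, fun h j hj => h ⟨j, by omega⟩ hj⟩

lemma measurableSet_firstBelow_preimage (i : ℕ) : MeasurableSet
    {x : Fin (i + 1) → ℝ | x (Fin.last i) ≤ -c ∧ ∀ j : Fin (i + 1), j < Fin.last i → -c < x j} := by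
  measurability

lemma pairwise_disjoint_firstBelow :
    Pairwise fun i i' => Disjoint (firstBelow W a c i) (firstBelow W a c i') := by
  intro i i' hne
  wlog h : i < i' generalizing i i'
  · exact (this hne.symm (hne.lt_or_gt.resolve_left h)).symm
  exact Set.disjoint_left.mpr fun ω hω hω' => (hω'.2 i h).not_ge hω.1

lemma exists_firstBelow {k : ℕ} {ω : Ω} (h : ∃ j ≤ k, W (a j) ω ≤ -c) :
    ∃ i ≤ k, ω ∈ firstBelow W a c i := by
  classical
  exact ⟨Nat.find h, (Nat.find_spec h).1, (Nat.find_spec h).2, fun j hj =>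
    not_le.mp fun hle => Nat.find_min h hj ⟨hj.le.trans (Nat.find_spec h).1, hle⟩⟩

variable [MeasurableSpace Ω] {P : Measure Ω}

lemma IsBrownianMotion.measurableSet_firstBelow (hW : IsBrownianMotion P W) (i : ℕ) :
    MeasurableSet (firstBelow W a c i) := by
  rw [firstBelow_eq_preimage]
  exact measurable_pi_lambda _ (fun j => hW.meas _) (measurableSet_firstBelow_preimage i)

namespace IsBrownianMotion

variable (hW : IsBrownianMotion P W) (ha : Monotone a) (ha0 : a 0 = 0)
include hW ha ha0

lemma measure_firstBelow_inter_sub_nonneg {i k : ℕ} (hik : i ≤ k) :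
    P (firstBelow W a c i ∩ {ω | 0 ≤ W (a k) ω - W (a i) ω})
      = P (firstBelow W a c i ∩ {ω | W (a k) ω - W (a i) ω ≤ 0}) := by
  rw [firstBelow_eq_preimage]
  exact hW.measure_preimage_inter_sub_nonneg ha ha0 hik (measurableSet_firstBelow_preimage i)

lemma measure_firstBelow_le_two_mul {i k : ℕ} (hik : i ≤ k) :
    P (firstBelow W a c i) ≤ 2 * P (firstBelow W a c i ∩ {ω | W (a k) ω - W (a i) ω ≤ 0}) := by
  calc P (firstBelow W a c i)
      ≤ P (firstBelow W a c i ∩ {ω | W (a k) ω - W (a i) ω ≤ 0}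
          ∪ firstBelow W a c i ∩ {ω | 0 ≤ W (a k) ω - W (a i) ω}) :=
        measure_mono (μ := P) fun ω hω => by
          rcases le_total (W (a k) ω - W (a i) ω) 0 with h | h
          exacts [Or.inl ⟨hω, h⟩, Or.inr ⟨hω, h⟩]
    _ ≤ P (firstBelow W a c i ∩ {ω | W (a k) ω - W (a i) ω ≤ 0})
          + P (firstBelow W a c i ∩ {ω | 0 ≤ W (a k) ω - W (a i) ω}) := measure_union_le _ _
    _ = _ := by rw [hW.measure_firstBelow_inter_sub_nonneg ha ha0 hik, two_mul]

lemma two_mul_measure_firstBelow_inter_lt_le {i k : ℕ} (hik : i ≤ k) :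
    2 * P (firstBelow W a c i ∩ {ω | W (a k) ω - W (a i) ω < 0}) ≤ P (firstBelow W a c i) := by
  have hZ : MeasurableSet {ω | W (a k) ω - W (a i) ω < 0} :=
    measurableSet_lt (hW.measurable_sub _ _) measurable_const
  calc 2 * P (firstBelow W a c i ∩ {ω | W (a k) ω - W (a i) ω < 0})
      ≤ P (firstBelow W a c i ∩ {ω | W (a k) ω - W (a i) ω < 0})
        + P (firstBelow W a c i ∩ {ω | W (a k) ω - W (a i) ω ≤ 0}) := by
        rw [two_mul]
        gcongr _ + P ?_
        exact inter_subset_inter_right _ fun ω (h : W (a k) ω - W (a i) ω < 0) => h.le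
    _ = P (firstBelow W a c i ∩ {ω | W (a k) ω - W (a i) ω < 0})
        + P (firstBelow W a c i \ {ω | W (a k) ω - W (a i) ω < 0}) := by
        rw [← hW.measure_firstBelow_inter_sub_nonneg ha ha0 hik]
        congr 2
        ext ω
        simp
    _ = P (firstBelow W a c i) := measure_inter_add_sdiff _ hZ

lemma measure_exists_skeleton_le_le (k : ℕ) :
    P {ω | ∃ j ≤ k, W (a j) ω ≤ -c} ≤ 2 * P {ω | W (a k) ω ≤ -c} := by
  calc P {ω | ∃ j ≤ k, W (a j) ω ≤ -c}
      ≤ P (⋃ i ∈ Finset.range (k + 1), firstBelow W a c i) := measure_mono fun ω hω => by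
        obtain ⟨i, hik, hi⟩ := exists_firstBelow hω
        exact mem_biUnion (Finset.mem_range.mpr (Nat.lt_succ_of_le hik)) hi
    _ ≤ ∑ i ∈ Finset.range (k + 1), P (firstBelow W a c i) := measure_biUnion_finset_le _ _
    _ ≤ ∑ i ∈ Finset.range (k + 1), 2 * P (firstBelow W a c i ∩ {ω | W (a k) ω ≤ -c}) := by
        refine Finset.sum_le_sum fun i hi => ?_
        refine (hW.measure_firstBelow_le_two_mul ha ha0
          (Nat.lt_succ_iff.mp (Finset.mem_range.mp hi))).trans ?_
        gcongr 2 * P ?_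
        intro ω hω
        refine ⟨hω.1, ?_⟩
        have h₁ : W (a i) ω ≤ -c := hω.1.1
        have h₂ : W (a k) ω - W (a i) ω ≤ 0 := hω.2
        exact show W (a k) ω ≤ -c by linarith
    _ = 2 * P (⋃ i ∈ Finset.range (k + 1), firstBelow W a c i ∩ {ω | W (a k) ω ≤ -c}) := by
        rw [← Finset.mul_sum, measure_biUnion_finset
          (fun i _ i' _ h => (pairwise_disjoint_firstBelow h).mono inter_subset_left
            inter_subset_left)
          fun i _ => (hW.measurableSet_firstBelow i).inter
            (measurableSet_le (hW.meas _) measurable_const)]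
    _ ≤ 2 * P {ω | W (a k) ω ≤ -c} := by
        gcongr
        exact iUnion₂_subset fun i _ => inter_subset_right

omit ha in
lemma le_neg_two_mul_subset (hc : 0 < c) (k : ℕ) :
    {ω | W (a k) ω ≤ -(2 * c)} ⊆
      (⋃ i ∈ Finset.range (k + 1), firstBelow W a c i ∩ {ω | W (a k) ω - W (a i) ω < 0}) ∪
        ⋃ j ∈ Finset.range k, {ω | W (a (j + 1)) ω - W (a j) ω ≤ -c} := by
  intro ω (hω : W (a k) ω ≤ -(2 * c))
  obtain ⟨i, hik, hi⟩ := exists_firstBelow (c := c) ⟨k, le_rfl, by linarith⟩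
  by_cases hover : -(2 * c) < W (a i) ω
  · refine Or.inl (mem_biUnion (Finset.mem_range.mpr (Nat.lt_succ_of_le hik)) ⟨hi, ?_⟩)
    exact show W (a k) ω - W (a i) ω < 0 by linarith
  -- otherwise the skeleton jumped from above `-c` to below `-2c` in a single step
  obtain ⟨j, rfl⟩ : ∃ j, i = j + 1 := Nat.exists_eq_succ_of_ne_zero fun h => by
    subst h
    simp [ha0, hW.init] at hover
    linarith
  refine Or.inr (mem_biUnion (Finset.mem_range.mpr hik) ?_)
  have := hi.2 j j.lt_succ_self
  exact show W (a (j + 1)) ω - W (a j) ω ≤ -c by linarith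

omit ha ha0 in
lemma measure_add_sum_firstBelow_le_one (k : ℕ) :
    P {ω | ∀ j ≤ k, -c < W (a j) ω} + ∑ i ∈ Finset.range (k + 1), P (firstBelow W a c i) ≤ 1 := by
  have := hW.isProb
  rw [← measure_biUnion_finset (fun i _ i' _ h => pairwise_disjoint_firstBelow h)
      fun i _ => hW.measurableSet_firstBelow i,
    ← measure_union _ (Finset.measurableSet_biUnion _ fun i _ => hW.measurableSet_firstBelow i)]
  · exact prob_le_one
  refine Set.disjoint_iUnion₂_right.mpr fun i hi => Set.disjoint_left.mpr fun ω hS hF => ?_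
  exact (hS i (Nat.lt_succ_iff.mp (Finset.mem_range.mp hi))).not_ge hF.1

lemma two_mul_measure_le_neg_two_mul_le (hc : 0 < c) (k : ℕ) :
    2 * P {ω | W (a k) ω ≤ -(2 * c)} ≤ ∑ i ∈ Finset.range (k + 1), P (firstBelow W a c i)
      + 2 * P (⋃ j ∈ Finset.range k, {ω | W (a (j + 1)) ω - W (a j) ω ≤ -c}) := by
  calc 2 * P {ω | W (a k) ω ≤ -(2 * c)}
      ≤ 2 * (∑ i ∈ Finset.range (k + 1),
          P (firstBelow W a c i ∩ {ω | W (a k) ω - W (a i) ω < 0})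
          + P (⋃ j ∈ Finset.range k, {ω | W (a (j + 1)) ω - W (a j) ω ≤ -c})) := by
        gcongr
        refine (measure_mono (hW.le_neg_two_mul_subset ha0 hc k)).trans <|
          (measure_union_le _ _).trans ?_
        gcongr
        exact measure_biUnion_finset_le _ _
    _ = ∑ i ∈ Finset.range (k + 1),
          2 * P (firstBelow W a c i ∩ {ω | W (a k) ω - W (a i) ω < 0})
          + 2 * P (⋃ j ∈ Finset.range k, {ω | W (a (j + 1)) ω - W (a j) ω ≤ -c}) := by
        rw [mul_add, Finset.mul_sum]
    _ ≤ _ := by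
        gcongr with i hi
        exact hW.two_mul_measure_firstBelow_inter_lt_le ha ha0
          (Nat.lt_succ_iff.mp (Finset.mem_range.mp hi))

lemma measure_forall_skeleton_gt_le (hc : 0 < c) (k : ℕ) :
    P {ω | ∀ j ≤ k, -c < W (a j) ω} ≤ gaussianReal 0 (a k).toNNReal (Icc (-(2 * c)) (2 * c))
      + 2 * P (⋃ j ∈ Finset.range k, {ω | W (a (j + 1)) ω - W (a j) ω ≤ -c}) := by
  set S := P {ω | ∀ j ≤ k, -c < W (a j) ω}
  set F := ∑ i ∈ Finset.range (k + 1), P (firstBelow W a c i)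
  set O := P (⋃ j ∈ Finset.range k, {ω | W (a (j + 1)) ω - W (a j) ω ≤ -c})
  set X := P {ω | W (a k) ω ≤ -(2 * c)}
  set G := gaussianReal 0 (a k).toNNReal (Icc (-(2 * c)) (2 * c))
  have := hW.isProb
  have hG : 1 ≤ 2 * X + G := by
    rw [show X = gaussianReal 0 (a k).toNNReal (Iic (-(2 * c))) from
      hW.measure_mem (ha0 ▸ ha (Nat.zero_le k)) measurableSet_Iic]
    exact one_le_two_mul_gaussianReal_Iic_add _ _
  refine (ENNReal.add_le_add_iff_left (a := 2 * X)
    (ENNReal.mul_ne_top ENNReal.ofNat_ne_top (measure_ne_top _ _))).mp ?_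
  calc 2 * X + S ≤ F + 2 * O + S := by gcongr; exact hW.two_mul_measure_le_neg_two_mul_le ha ha0 hc k
    _ = (S + F) + 2 * O := by ring
    _ ≤ 1 + 2 * O := by gcongr; exact hW.measure_add_sum_firstBelow_le_one k
    _ ≤ 2 * X + G + 2 * O := by gcongr
    _ = 2 * X + (G + 2 * O) := by ring

end IsBrownianMotion

end FirstPassage

lemma Continuous.exists_dyadic_lt {f : ℝ → ℝ} (hf : Continuous f) {u s ε : ℝ} (hu : 0 < u)
    (hs : s ∈ Icc 0 u) (hε : 0 < ε) :
    ∃ m j : ℕ, j ≤ 2 ^ m ∧ f (j * u / 2 ^ m) < f s + ε := by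
  obtain ⟨δ, hδ, hfδ⟩ := Metric.continuous_iff.mp hf s ε hε
  obtain ⟨m, hm⟩ := exists_pow_lt_of_lt_one (div_pos hδ hu) (by norm_num : (2⁻¹ : ℝ) < 1)
  have h2m : (0 : ℝ) < 2 ^ m := by positivity
  have hx : 0 ≤ s * 2 ^ m / u := by have := hs.1; positivity
  refine ⟨m, ⌊s * 2 ^ m / u⌋₊, Nat.floor_le_of_le ?_, ?_⟩
  · rw [div_le_iff₀ hu]
    push_cast
    nlinarith [hs.2]
  have hlo : ⌊s * 2 ^ m / u⌋₊ * u / 2 ^ m ≤ s := by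
    rw [div_le_iff₀ h2m, ← le_div_iff₀ hu]
    exact Nat.floor_le hx
  have hhi : s < ⌊s * 2 ^ m / u⌋₊ * u / 2 ^ m + u * 2⁻¹ ^ m := by
    rw [inv_pow, ← div_eq_mul_inv, ← add_div, lt_div_iff₀ h2m, ← add_one_mul, ← div_lt_iff₀ hu]
    exact Nat.lt_floor_add_one _
  have hdist : dist (⌊s * 2 ^ m / u⌋₊ * u / 2 ^ m) s < δ := by
    rw [Real.dist_eq, abs_of_nonpos (by linarith)]
    rw [lt_div_iff₀ hu, mul_comm] at hm
    linarith
  linarith [(abs_lt.mp (Real.dist_eq _ _ ▸ hfδ _ hdist)).2]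


lemma monotone_uniformGrid {u : ℝ} (hu : 0 ≤ u) (k : ℕ) : Monotone fun j : ℕ => (j : ℝ) * u / k :=
  fun i j h => by dsimp only; gcongr

namespace IsBrownianMotion

variable {Ω : Type*} [MeasurableSpace Ω] {P : Measure Ω} {W : ℝ → Ω → ℝ} {u c : ℝ}

lemma measure_le_neg_le (hW : IsBrownianMotion P W) (hu : 0 < u) (hc : 0 ≤ c) :
    P {ω | W u ω ≤ -c} ≤ ENNReal.ofReal (exp (-c ^ 2 / (2 * u))) := by
  simpa [hW.init] using hW.measure_sub_le_neg_le le_rfl hu hc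

lemma measure_exists_uniformGrid_sub_le (hW : IsBrownianMotion P W) (hu : 0 < u) (hc : 0 ≤ c)
    (k : ℕ) :
    P (⋃ j ∈ Finset.range k, {ω | W (((j + 1 : ℕ) : ℝ) * u / k) ω - W (j * u / k) ω ≤ -c})
      ≤ ENNReal.ofReal (k * exp (-c ^ 2 / (2 * u)) ^ k) := by
  refine (measure_biUnion_finset_le _ _).trans ?_
  calc ∑ j ∈ Finset.range k, P {ω | W (((j + 1 : ℕ) : ℝ) * u / k) ω - W (j * u / k) ω ≤ -c}
      ≤ ∑ j ∈ Finset.range k, ENNReal.ofReal (exp (-c ^ 2 / (2 * u)) ^ k) := by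
        refine Finset.sum_le_sum fun j hj => ?_
        have hk : (0 : ℝ) < k := Nat.cast_pos.mpr (Nat.zero_lt_of_lt (Finset.mem_range.mp hj))
        refine (hW.measure_sub_le_neg_le (by positivity) ?_ hc).trans_eq ?_
        · gcongr
          linarith
        rw [← exp_nat_mul]
        congr 2
        push_cast
        field_simp
        ring
    _ = ENNReal.ofReal (k * exp (-c ^ 2 / (2 * u)) ^ k) := by
        rw [Finset.sum_const, Finset.card_range, nsmul_eq_mul, ENNReal.ofReal_mul (by positivity),
          ENNReal.ofReal_natCast]

lemma measure_exists_le_neg_le (hW : IsBrownianMotion P W) (hu : 0 < u) (hc : 0 < c) :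
    P {ω | ∃ s ∈ Icc 0 u, W s ω ≤ -c} ≤ ENNReal.ofReal (2 * exp (-c ^ 2 / (8 * u))) := by
  set S : ℕ → Set Ω := fun m => {ω | ∃ j : ℕ, j ≤ 2 ^ m ∧ W (j * u / 2 ^ m) ω ≤ -(c / 2)}
  have hS : Monotone S := monotone_nat_of_le_succ fun m ω ⟨j, hj, hWj⟩ => by
    refine ⟨2 * j, by rw [pow_succ]; omega, ?_⟩
    have h2j : ((2 * j : ℕ) : ℝ) * u / 2 ^ (m + 1) = j * u / 2 ^ m := by
      push_cast
      field_simp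
      ring
    rwa [h2j]
  have hsub : {ω | ∃ s ∈ Icc 0 u, W s ω ≤ -c} ⊆ ⋃ m, S m := fun ω ⟨s, hs, hWs⟩ => by
    obtain ⟨m, j, hj, hlt⟩ := (hW.cont ω).exists_dyadic_lt hu hs (half_pos hc)
    exact mem_iUnion.mpr ⟨m, j, hj, by linarith⟩
  have hSm : ∀ m, P (S m) ≤ 2 * P {ω | W u ω ≤ -(c / 2)} := fun m => by
    have h := hW.measure_exists_skeleton_le_le (c := c / 2)
      (monotone_uniformGrid hu.le (2 ^ m)) (by simp) (2 ^ m)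
    simp only [Nat.cast_pow, Nat.cast_ofNat] at h
    rwa [mul_div_cancel_left₀ _ (by positivity)] at h
  calc P {ω | ∃ s ∈ Icc 0 u, W s ω ≤ -c} ≤ ⨆ m, P (S m) :=
        (measure_mono hsub).trans_eq hS.measure_iUnion
    _ ≤ 2 * ENNReal.ofReal (exp (-(c / 2) ^ 2 / (2 * u))) :=
        iSup_le fun m => (hSm m).trans (mul_le_mul_right
          (hW.measure_le_neg_le hu (half_pos hc).le) 2)
    _ = ENNReal.ofReal (2 * exp (-c ^ 2 / (8 * u))) := by
        rw [ENNReal.ofReal_mul zero_le_two, ENNReal.ofReal_ofNat]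
        ring_nf

lemma measure_forall_neg_lt_le (hW : IsBrownianMotion P W) (hu : 0 < u) (hc : 0 < c) :
    P {ω | ∀ s ∈ Icc 0 u, -c < W s ω} ≤ ENNReal.ofReal (4 * c / √(2 * π * u)) := by
  set q := exp (-c ^ 2 / (2 * u))
  have hq : q < 1 := exp_lt_one_iff.mpr (div_neg_of_neg_of_pos (by nlinarith) (by positivity))
  have hk : ∀ k : ℕ, 1 ≤ k → P {ω | ∀ s ∈ Icc 0 u, -c < W s ω}
      ≤ ENNReal.ofReal (4 * c / √(2 * π * u)) + 2 * ENNReal.ofReal (k * q ^ k) := by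
    intro k hk
    have hk' : (0 : ℝ) < k := by exact_mod_cast hk
    have h := hW.measure_forall_skeleton_gt_le (c := c) (monotone_uniformGrid hu.le k)
      (by simp) hc k
    simp only [mul_div_cancel_left₀ _ hk'.ne'] at h
    calc P {ω | ∀ s ∈ Icc 0 u, -c < W s ω} ≤ P {ω | ∀ j ≤ k, -c < W (j * u / k) ω} :=
          measure_mono fun ω hω j hj => hω _ ⟨by positivity, by
            rw [div_le_iff₀ hk', mul_comm u]; gcongr⟩
      _ ≤ _ := h.trans ?_
    gcongr
    · refine (gaussianReal_Icc_le (by simpa using hu) _ _).trans_eq ?_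
      rw [Real.coe_toNNReal _ hu.le]
      ring_nf
    · exact hW.measure_exists_uniformGrid_sub_le hu hc.le k
  have hlim : Tendsto (fun k : ℕ => ENNReal.ofReal (4 * c / √(2 * π * u))
      + 2 * ENNReal.ofReal (k * q ^ k)) atTop (𝓝 (ENNReal.ofReal (4 * c / √(2 * π * u)))) := by
    have h := ENNReal.tendsto_ofReal (tendsto_self_mul_const_pow_of_lt_one (exp_pos _).le hq)
    simpa using (ENNReal.Tendsto.const_mul h (Or.inr ENNReal.ofNat_ne_top)).const_add
      (ENNReal.ofReal (4 * c / √(2 * π * u)))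
  exact ge_of_tendsto hlim (eventually_atTop.mpr ⟨1, hk⟩)

lemma measure_exists_ge_le (hW : IsBrownianMotion P W) (hu : 0 < u) (hc : 0 < c) :
    P {ω | ∃ s ∈ Icc 0 u, c ≤ W s ω} ≤ ENNReal.ofReal (2 * exp (-c ^ 2 / (8 * u))) := by
  simpa only [neg_le_neg_iff] using hW.neg.measure_exists_le_neg_le hu hc

lemma measure_forall_lt_le (hW : IsBrownianMotion P W) (hu : 0 < u) (hc : 0 < c) :
    P {ω | ∀ s ∈ Icc 0 u, W s ω < c} ≤ ENNReal.ofReal (4 * c / √(2 * π * u)) := by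
  simpa only [neg_lt_neg_iff] using hW.neg.measure_forall_neg_lt_le hu hc

lemma ae_exists_gt (hW : IsBrownianMotion P W) : ∀ᵐ ω ∂P, ∀ x : ℝ, ∃ s, 0 ≤ s ∧ x < W s ω := by
  have hK (K : ℕ) : ∀ᵐ ω ∂P, ∃ s, 0 ≤ s ∧ (K : ℝ) < W s ω := by
    refine ae_iff.mpr (le_antisymm ?_ zero_le)
    have hlim : Tendsto (fun n : ℕ => ENNReal.ofReal (4 * (K + 1) / √(2 * π) / n)) atTop (𝓝 0) := by
      simpa using ENNReal.tendsto_ofReal (tendsto_const_div_atTop_nhds_zero_nat _)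
    refine ge_of_tendsto hlim (eventually_atTop.mpr ⟨1, fun n hn => ?_⟩)
    have hn' : (0 : ℝ) < n := by exact_mod_cast hn
    calc P {ω | ¬∃ s, 0 ≤ s ∧ (K : ℝ) < W s ω}
        ≤ P {ω | ∀ s ∈ Icc 0 ((n : ℝ) ^ 2), W s ω < K + 1} := measure_mono fun ω hω s hs =>
          (not_lt.mp fun h => hω ⟨s, hs.1, h⟩).trans_lt (lt_add_one _)
      _ ≤ _ := hW.measure_forall_lt_le (by positivity) (by positivity)
      _ = _ := by
          rw [Real.sqrt_mul (by positivity), Real.sqrt_sq hn'.le, div_div]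
  filter_upwards [ae_all_iff.mpr hK] with ω hω x
  obtain ⟨s, hs, h⟩ := hω ⌈x⌉₊
  exact ⟨s, hs, (Nat.le_ceil x).trans_lt h⟩

end IsBrownianMotion

section RunningInfimum

variable {Ω : Type*} {W : ℝ → Ω → ℝ} {ω : Ω}

lemma runInf_le (hcont : Continuous fun t => W t ω) {s t : ℝ} (hs : s ∈ Icc 0 t) :
    runInf W ω t ≤ W s ω :=
  csInf_le (isCompact_Icc.image hcont).bddBelow ⟨s, hs, rfl⟩

lemma exists_eq_runInf (hcont : Continuous fun t => W t ω) {t : ℝ} (ht : 0 ≤ t) :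
    ∃ s ∈ Icc 0 t, W s ω = runInf W ω t :=
  (isCompact_Icc.image hcont).sInf_mem ((nonempty_Icc.mpr ht).image _)

lemma runInf_zero : runInf W ω 0 = W 0 ω := by
  rw [runInf, Icc_self, image_singleton, csInf_singleton]

/-- Rescaling `[0, t]` to `[0, 1]` exhibits the running infimum as an infimum over a fixed
compact set of a jointly continuous function. -/
lemma continuousOn_runInf (hcont : Continuous fun t => W t ω) :
    ContinuousOn (runInf W ω) (Ici 0) := by
  have h : Continuous fun t => sInf ((fun θ => W (θ * t) ω) '' Icc 0 1) :=
    isCompact_Icc.continuous_sInf (f := fun t θ => W (θ * t) ω) <| by fun_prop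
  refine h.continuousOn.congr fun t (ht : 0 ≤ t) => ?_
  have hIcc : (· * t) '' Icc (0 : ℝ) 1 = Icc 0 t := by
    simpa using image_mul_right_Icc zero_le_one ht
  rw [runInf, ← hIcc, image_image]

lemma tauPlus_mem (hcont : Continuous fun t => W t ω) {r : ℝ} (hr : 0 ≤ r)
    (hrise : ∃ s, 0 ≤ s ∧ r ≤ W s ω - runInf W ω s) :
    0 ≤ tauPlus W r ω ∧ W (tauPlus W r ω) ω - runInf W ω (tauPlus W r ω) = r := by
  obtain ⟨s, hs, hrs⟩ := hrise
  have hg : ContinuousOn (fun t => W t ω - runInf W ω t) (Ici 0) :=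
    hcont.continuousOn.sub (continuousOn_runInf hcont)
  obtain ⟨x, hx, hgx⟩ := intermediate_value_Icc hs (hg.mono Icc_subset_Ici_self)
    ⟨by simpa [runInf_zero] using hr, hrs⟩
  have hclosed : IsClosed {t | 0 ≤ t ∧ W t ω - runInf W ω t = r} :=
    hg.preimage_isClosed_of_isClosed isClosed_Ici isClosed_singleton
  exact hclosed.csInf_mem ⟨x, hx.1, hgx⟩ ⟨0, fun t ht => ht.1⟩

lemma betaPlus_mem (hcont : Continuous fun t => W t ω) {r : ℝ} (hτ : 0 ≤ tauPlus W r ω) :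
    0 ≤ betaPlus W r ω ∧ W (betaPlus W r ω) ω = runInf W ω (tauPlus W r ω) := by
  obtain ⟨s, hs, hWs⟩ := exists_eq_runInf hcont hτ
  have hclosed : IsClosed {t | 0 ≤ t ∧ W t ω = runInf W ω (tauPlus W r ω)} :=
    isClosed_Ici.inter (isClosed_eq hcont continuous_const)
  exact hclosed.csInf_mem ⟨s, hs.1, hWs⟩ ⟨0, fun t ht => ht.1⟩

lemma runInf_tauPlus_le (hcont : Continuous fun t => W t ω) {r R h v : ℝ} (hRr : R ≤ r)
    (hτ : 0 ≤ tauPlus W r ω) (hτr : W (tauPlus W r ω) ω - runInf W ω (tauPlus W r ω) = r)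
    (hlow : ∃ s ∈ Icc 0 v, W s ω ≤ -h) (hhigh : ∀ s ∈ Icc 0 v, W s ω < R - h) :
    runInf W ω (tauPlus W r ω) ≤ -h := by
  by_contra! hM
  obtain ⟨s, hs, hWs⟩ := hlow
  -- otherwise `W τ = runInf τ + r > R - h`, so `τ > v`, after the dip to `-h`
  have hvτ : v < tauPlus W r ω := not_le.mp fun hτv =>
    (hhigh _ ⟨hτ, hτv⟩).not_ge (by linarith)
  linarith [runInf_le hcont ⟨hs.1, hs.2.trans hvτ.le⟩]

lemma lt_betaPlus (hcont : Continuous fun t => W t ω) {r h T : ℝ} (hτ : 0 ≤ tauPlus W r ω)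
    (hM : runInf W ω (tauPlus W r ω) ≤ -h) (habove : ∀ s ∈ Icc 0 T, -h < W s ω) :
    T < betaPlus W r ω := by
  obtain ⟨hβ, hWβ⟩ := betaPlus_mem hcont hτ
  exact not_le.mp fun hβT => (habove _ ⟨hβ, hβT⟩).not_ge (hWβ ▸ hM)

end RunningInfimum

section Parameters

-- `T_n`, `h_n` and `v_n` in the notation of the proof sketch
def timeBound (n : ℕ) : ℝ := exp (2 * n + 2) / n ^ 4

def depth (n : ℕ) : ℝ := √(16 * timeBound n * log n)

def window (n : ℕ) : ℝ := exp (2 * n) / (64 * log n)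

variable {n : ℕ}

lemma one_le_log_of_eight_le (hn : 8 ≤ n) : 1 ≤ log n := by
  rw [le_log_iff_exp_le (by positivity)]
  have : (8 : ℝ) ≤ n := by exact_mod_cast hn
  linarith [exp_one_lt_d9]

lemma exp_two_le_eight : exp 2 ≤ 8 := by
  have h : exp 2 = exp 1 * exp 1 := by rw [← exp_add]; norm_num
  nlinarith [exp_one_lt_d9, exp_pos 1]

lemma timeBound_pos (hn : 1 ≤ n) : 0 < timeBound n := by
  have : (0 : ℝ) < n := by exact_mod_cast hn
  unfold timeBound
  positivity

lemma window_pos (hn : 8 ≤ n) : 0 < window n := by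
  have := one_le_log_of_eight_le hn
  unfold window
  positivity

lemma depth_sq (hn : 8 ≤ n) : depth n ^ 2 = 16 * timeBound n * log n := by
  have := timeBound_pos (by omega : 1 ≤ n)
  have := one_le_log_of_eight_le hn
  exact sq_sqrt (by positivity)

lemma depth_pos (hn : 8 ≤ n) : 0 < depth n := by
  have := timeBound_pos (by omega : 1 ≤ n)
  have := one_le_log_of_eight_le hn
  exact sqrt_pos.mpr (by positivity)

lemma exp_neg_two_mul_log (hn : 1 ≤ n) : exp (-(2 * log n)) = ((n : ℝ) ^ 2)⁻¹ := by
  rw [exp_neg, two_mul, exp_add, exp_log (by positivity), sq]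

lemma exp_neg_depth_sq_div (hn : 8 ≤ n) :
    exp (-depth n ^ 2 / (8 * timeBound n)) = ((n : ℝ) ^ 2)⁻¹ := by
  have := timeBound_pos (by omega : 1 ≤ n)
  rw [depth_sq hn, ← exp_neg_two_mul_log (by omega : 1 ≤ n)]
  congr 1
  field_simp
  ring

lemma depth_le_half_exp (hn : 8 ≤ n) : depth n ≤ exp n / 2 := by
  have hx : (8 : ℝ) ≤ n := by exact_mod_cast hn
  have hlog : log n ≤ n := (log_le_sub_one_of_pos (by positivity)).trans (by linarith)
  have hL := one_le_log_of_eight_le hn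
  rw [depth, sqrt_le_left (by positivity), timeBound, div_pow, mul_div_assoc', div_mul_eq_mul_div,
    div_le_div_iff₀ (by positivity) (by positivity), show 2 * (n : ℝ) + 2 = 2 + n + n by ring,
    exp_add, exp_add]
  have h512 : 64 * exp 2 * log n ≤ (n : ℝ) ^ 4 := by
    nlinarith [exp_two_le_eight, exp_pos 2, pow_le_pow_left₀ (by norm_num : (0 : ℝ) ≤ 8) hx 3]
  nlinarith [exp_pos (n : ℝ)]

lemma exp_neg_sq_div_window_le (hn : 8 ≤ n) :
    exp (-(exp n - depth n) ^ 2 / (8 * window n)) ≤ ((n : ℝ) ^ 2)⁻¹ := by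
  have hL := one_le_log_of_eight_le hn
  have hd := depth_le_half_exp hn
  have hsq : (exp n / 2) ^ 2 ≤ (exp n - depth n) ^ 2 :=
    pow_le_pow_left₀ (by positivity) (by linarith) 2
  rw [← exp_neg_two_mul_log (by omega : 1 ≤ n), exp_le_exp, neg_div, neg_le_neg_iff,
    le_div_iff₀ (by linarith [window_pos hn]), window, show 2 * (n : ℝ) = n + n by ring, exp_add]
  calc 2 * log n * (8 * (exp n * exp n / (64 * log n))) = (exp n / 2) ^ 2 := by
        field_simp
        ring
    _ ≤ _ := hsq

lemma depth_div_sqrt_window_le (hn : 8 ≤ n) :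
    4 * depth n / √(2 * π * window n) ≤ 200 * log n / n ^ 2 := by
  have hx : (0 : ℝ) < n := by positivity
  have hL := one_le_log_of_eight_le hn
  have hw := window_pos hn
  rw [div_le_iff₀ (by positivity), ← sqrt_sq (by linarith [depth_pos hn] : 0 ≤ 4 * depth n),
    ← sqrt_sq (by positivity : 0 ≤ 200 * log n / n ^ 2), ← sqrt_mul (sq_nonneg _)]
  refine sqrt_le_sqrt ?_
  rw [mul_pow, depth_sq hn, timeBound, window, show 2 * (n : ℝ) + 2 = 2 * n + 2 by ring, exp_add]
  have hπ := pi_gt_three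
  have he := exp_two_le_eight
  field_simp
  nlinarith [exp_pos (2 * (n : ℝ)), exp_pos 2]

lemma sq_div_log_pow_le_timeBound {r : ℝ} (hn : 1 ≤ n) (hlo : exp n ≤ r)
    (hhi : r ≤ exp (n + 1)) : r ^ 2 / log r ^ 4 ≤ timeBound n := by
  have hr : 0 < r := (exp_pos _).trans_le hlo
  have hlog : (n : ℝ) ≤ log r := (le_log_iff_exp_le hr).mpr hlo
  have hx : (0 : ℝ) < n := by exact_mod_cast hn
  refine div_le_div₀ (by positivity) ?_ (by positivity) (pow_le_pow_left₀ hx.le hlog 4)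
  calc r ^ 2 ≤ exp (n + 1) ^ 2 := pow_le_pow_left₀ hr.le hhi 2
    _ = exp (2 * n + 2) := by rw [← exp_nat_mul]; push_cast; ring_nf

lemma summable_log_div_sq : Summable fun n : ℕ => log n / (n : ℝ) ^ 2 := by
  refine ((summable_nat_rpow_inv.mpr (by norm_num : (1 : ℝ) < 3 / 2)).mul_left 2).of_nonneg_of_le
    (fun n => by positivity) fun n => ?_
  rcases n.eq_zero_or_pos with rfl | hn
  · simp
  have hx : (0 : ℝ) < n := by exact_mod_cast hn
  have hlog : log n ≤ (n : ℝ) ^ (1 / 2 : ℝ) / (1 / 2) := log_le_rpow_div hx.le (by norm_num)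
  calc log n / (n : ℝ) ^ 2 ≤ (n : ℝ) ^ (1 / 2 : ℝ) / (1 / 2) / (n : ℝ) ^ 2 := by gcongr
    _ = 2 * ((n : ℝ) ^ (3 / 2 : ℝ))⁻¹ := by
        have h2 : (n : ℝ) ^ 2 = (n : ℝ) ^ (1 / 2 : ℝ) * (n : ℝ) ^ (3 / 2 : ℝ) := by
          rw [← rpow_add hx]
          norm_num
        rw [h2]
        field_simp

end Parameters

section BadEvents

variable {Ω : Type*} {W : ℝ → Ω → ℝ}

def badSet (W : ℝ → Ω → ℝ) (n : ℕ) : Set Ω :=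
  {ω | ∃ s ∈ Icc 0 (timeBound n), W s ω ≤ -depth n} ∪
    {ω | ∃ s ∈ Icc 0 (window n), exp n - depth n ≤ W s ω} ∪
    {ω | ∀ s ∈ Icc 0 (window n), -depth n < W s ω}

lemma timeBound_lt_betaPlus {ω : Ω} (hcont : Continuous fun t => W t ω) (h0 : W 0 ω = 0)
    {n : ℕ} {r : ℝ} (hr : exp n ≤ r) (hgood : ω ∉ badSet W n)
    (hup : ∃ s, 0 ≤ s ∧ r < W s ω) : timeBound n < betaPlus W r ω := by
  have habove : ∀ s ∈ Icc 0 (timeBound n), -depth n < W s ω := fun s hs =>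
    not_le.mp fun h => hgood (Or.inl (Or.inl ⟨s, hs, h⟩))
  have hhigh : ∀ s ∈ Icc 0 (window n), W s ω < exp n - depth n := fun s hs =>
    not_le.mp fun h => hgood (Or.inl (Or.inr ⟨s, hs, h⟩))
  have hlow : ∃ s ∈ Icc 0 (window n), W s ω ≤ -depth n := by
    by_contra! h
    exact hgood (Or.inr h)
  obtain ⟨s, hs, hrs⟩ := hup
  have hmin : runInf W ω s ≤ 0 := h0 ▸ runInf_le hcont ⟨le_rfl, hs⟩
  obtain ⟨hτ, hτr⟩ := tauPlus_mem hcont ((exp_pos _).le.trans hr) ⟨s, hs, by linarith⟩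
  exact lt_betaPlus hcont hτ (runInf_tauPlus_le hcont hr hτ hτr hlow hhigh) habove

variable [MeasurableSpace Ω] {P : Measure Ω}

lemma IsBrownianMotion.measure_badSet_le (hW : IsBrownianMotion P W) {n : ℕ} (hn : 8 ≤ n) :
    P (badSet W n) ≤ ENNReal.ofReal (204 * (log n / n ^ 2)) := by
  have hL := one_le_log_of_eight_le hn
  have hd := depth_le_half_exp hn
  calc P (badSet W n)
      ≤ P {ω | ∃ s ∈ Icc 0 (timeBound n), W s ω ≤ -depth n}
        + P {ω | ∃ s ∈ Icc 0 (window n), exp n - depth n ≤ W s ω}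
        + P {ω | ∀ s ∈ Icc 0 (window n), -depth n < W s ω} :=
        (measure_union_le _ _).trans (by gcongr; exact measure_union_le _ _)
    _ ≤ ENNReal.ofReal (2 * ((n : ℝ) ^ 2)⁻¹) + ENNReal.ofReal (2 * ((n : ℝ) ^ 2)⁻¹)
        + ENNReal.ofReal (200 * log n / n ^ 2) := by
        gcongr
        · refine (hW.measure_exists_le_neg_le (timeBound_pos (by omega)) (depth_pos hn)).trans_eq ?_
          rw [exp_neg_depth_sq_div hn]
        · refine (hW.measure_exists_ge_le (window_pos hn) (by linarith [exp_pos (n : ℝ)])).trans ?_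
          gcongr
          exact exp_neg_sq_div_window_le hn
        · exact (hW.measure_forall_neg_lt_le (window_pos hn) (depth_pos hn)).trans
            (ENNReal.ofReal_le_ofReal (depth_div_sqrt_window_le hn))
    _ ≤ ENNReal.ofReal (204 * (log n / n ^ 2)) := by
        rw [← ENNReal.ofReal_add (by positivity) (by positivity),
          ← ENNReal.ofReal_add (by positivity) (by positivity)]
        refine ENNReal.ofReal_le_ofReal ?_
        have hx : (0 : ℝ) < n ^ 2 := by positivity
        rw [← div_eq_mul_inv, mul_div_assoc', mul_div_assoc]
        field_simp
        linarith

lemma IsBrownianMotion.ae_eventually_notMem_badSet (hW : IsBrownianMotion P W) :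
    ∀ᵐ ω ∂P, ∀ᶠ n in atTop, ω ∉ badSet W n := by
  have hsum : Summable fun m : ℕ => 204 * (log ((m + 8 : ℕ) : ℝ) / ((m + 8 : ℕ) : ℝ) ^ 2) :=
    (summable_nat_add_iff 8).mpr (summable_log_div_sq.mul_left 204)
  have hfin : ∑' m, P (badSet W (m + 8)) ≠ ∞ := by
    refine ne_top_of_le_ne_top ENNReal.ofReal_ne_top <|
      (ENNReal.tsum_le_tsum fun m => hW.measure_badSet_le (by omega)).trans_eq
        (ENNReal.ofReal_tsum_of_nonneg (fun m => by positivity) hsum).symm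
  filter_upwards [ae_eventually_notMem hfin] with ω hω
  obtain ⟨M, hM⟩ := eventually_atTop.mp hω
  refine eventually_atTop.mpr ⟨M + 8, fun n hn => ?_⟩
  simpa [Nat.sub_add_cancel (by omega : 8 ≤ n)] using hM (n - 8) (by omega)

end BadEvents

/-- The almost-sure lower bound at the end of the proof of Lemma 3.12
(intervlemma): with probability one, `β_r⁺ > r²/(log r)⁴` for all sufficiently
large `r`. -/
theorem favorite_points_betaPlus_growth
    {Ω : Type*} [MeasurableSpace Ω] (P : Measure Ω) (W : ℝ → Ω → ℝ)
    (hW : IsBrownianMotion P W) :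
    ∀ᵐ ω ∂P, ∃ r₀ : ℝ, ∀ r : ℝ, r₀ ≤ r →
      r ^ 2 / Real.log r ^ 4 < betaPlus W r ω := by
  filter_upwards [hW.ae_eventually_notMem_badSet, hW.ae_exists_gt] with ω hgood hup
  obtain ⟨N, hN⟩ := eventually_atTop.mp hgood
  refine ⟨exp (N + 8), fun r hr => ?_⟩
  have hr0 : 0 < r := (exp_pos _).trans_le hr
  have hlog : (N : ℝ) + 8 ≤ log r := (le_log_iff_exp_le hr0).mpr hr
  set n := ⌊log r⌋₊
  have hNn : N + 8 ≤ n := Nat.le_floor (by push_cast; exact hlog)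
  have hlo : exp n ≤ r :=
    (exp_le_exp.mpr (Nat.floor_le (by linarith))).trans_eq (exp_log hr0)
  have hhi : r ≤ exp (n + 1) :=
    (exp_log hr0).symm.trans_le (exp_le_exp.mpr (Nat.lt_floor_add_one _).le)
  exact (sq_div_log_pow_le_timeBound (by omega) hlo hhi).trans_lt
    (timeBound_lt_betaPlus (hW.cont ω) (hW.init ω) hlo (hN n (by omega)) (hup r))

end
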